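/- Complex targeted τ manipulation (non-victim case): Fix a target (victim) user v ∈ V_R with vector x_v, and a non-victim regular user i ≠ v. Let Q = x_i + Clip(x_v − x_i, τ_i) and C = Σ_{j∈V_R} W_{ij} Clip(x_j − x_i, τ_i). Suppose every Byzantine user b ∈ V_B sends to user i the vector x_b = x_i − (Q + C) / W_B, where W_B = Σ_{b∈V_B} W_{ib} > 0. If ‖(Q + C) / W_B‖ ≤ τ_i, then the aggregated update satisfies SCClip_i(x_1, …, x_n; τ_i) = x_i − Q = −Clip(x_v − x_i, τ_i); i.e., user i is pushed opposite to the victim's direction. -/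
import Mathlib


open Finset

/-- Norm clipping: `Clip z τ = min 1 (τ/‖z‖) • z` (with `Clip 0 τ = 0`).
Note `Clip z τ = z` whenever `‖z‖ ≤ τ`. -/
noncomputable def Clip {d : ℕ} (z : EuclideanSpace ℝ (Fin d)) (τ : ℝ) :
    EuclideanSpace ℝ (Fin d) :=
  (min 1 (τ / ‖z‖)) • z

/-- Self-centered clipping aggregation of user `i` (own vector `xi`) over
the user set `V` with weights `W` and radius `τ`:
`SCClip_i(x₁,…,xₙ; τ) = ∑_{j∈V} W_{ij} (x_i + Clip(x_j − x_i, τ))`. -/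
noncomputable def SCClip {ι : Type*} {d : ℕ} (V : Finset ι) (W : ι → ℝ)
    (xi : EuclideanSpace ℝ (Fin d)) (x : ι → EuclideanSpace ℝ (Fin d)) (τ : ℝ) :
    EuclideanSpace ℝ (Fin d) :=
  ∑ j ∈ V, W j • (xi + Clip (x j - xi) τ)

lemma Clip_of_norm_le {d : ℕ} {z : EuclideanSpace ℝ (Fin d)} {τ : ℝ}
    (h : ‖z‖ ≤ τ) : Clip z τ = z := by
  unfold Clip
  rcases eq_or_ne z 0 with rfl | hz
  · simp
  · have hzn : 0 < ‖z‖ := norm_pos_iff.mpr hz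
    have : (1 : ℝ) ≤ τ / ‖z‖ := (one_le_div hzn).mpr h
    rw [min_eq_left this, one_smul]

/-- Complex targeted τ manipulation (non-victim case): a non-victim user `i`
is pushed opposite to the victim's direction. -/
theorem complex_targeted_tau_manipulation {ι : Type*} [DecidableEq ι] {d : ℕ}
    (V VR : Finset ι) (hVR : VR ⊆ V)
    (W : ι → ℝ) (hW0 : ∀ j ∈ V, 0 ≤ W j) (hW1 : ∑ j ∈ V, W j = 1)
    (v i : ι) (hv : v ∈ VR) (hi : i ∈ VR) (hiv : i ≠ v)
    (τ : ℝ) (hτ : 0 ≤ τ)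
    (x : ι → EuclideanSpace ℝ (Fin d))
    (Q : EuclideanSpace ℝ (Fin d)) (hQ : Q = x i + Clip (x v - x i) τ)
    (C : EuclideanSpace ℝ (Fin d)) (hC : C = ∑ j ∈ VR, W j • Clip (x j - x i) τ)
    (WB : ℝ) (hWB : WB = ∑ b ∈ V \ VR, W b) (hWBpos : 0 < WB)
    (hsend : ∀ b ∈ V \ VR, x b = x i - WB⁻¹ • (Q + C))
    (hnoclipB : ‖WB⁻¹ • (Q + C)‖ ≤ τ) :
    SCClip V W (x i) x τ = x i - Q ∧ x i - Q = -Clip (x v - x i) τ := by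
  constructor
  · unfold SCClip
    rw [← Finset.sum_sdiff hVR]
    have hbyz : ∑ j ∈ V \ VR, W j • (x i + Clip (x j - x i) τ)
        = WB • (x i) - (Q + C) := by
      have : ∀ j ∈ V \ VR, W j • (x i + Clip (x j - x i) τ)
          = W j • (x i - WB⁻¹ • (Q + C)) := by
        intro j hj
        rw [hsend j hj]
        congr 1
        have : x i - WB⁻¹ • (Q + C) - x i = -(WB⁻¹ • (Q + C)) := by abel
        rw [this, Clip_of_norm_le (by rwa [norm_neg])]
        abel
      rw [Finset.sum_congr rfl this, ← Finset.sum_smul, ← hWB, smul_sub,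
        smul_smul, mul_inv_cancel₀ hWBpos.ne', one_smul]
    have hreg : ∑ j ∈ VR, W j • (x i + Clip (x j - x i) τ)
        = (∑ j ∈ VR, W j) • (x i) + C := by
      simp only [hC, smul_add, Finset.sum_add_distrib, Finset.sum_smul]
    rw [hbyz, hreg]
    have hsum : (∑ j ∈ VR, W j) • (x i) + WB • (x i) = x i := by
      rw [← add_smul, hWB]
      have : ∑ j ∈ VR, W j + ∑ b ∈ V \ VR, W b = 1 := by
        rw [add_comm, Finset.sum_sdiff hVR, hW1]
      rw [this, one_smul]
    calc WB • x i - (Q + C) + ((∑ j ∈ VR, W j) • x i + C)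
        = ((∑ j ∈ VR, W j) • (x i) + WB • (x i)) - Q := by abel
      _ = x i - Q := by rw [hsum]
  · rw [hQ]; abel
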